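/- arXiv:2206.01954 — 4 statements merged into one kernel-verified Lean document; each statement's English description precedes it below -/
import Mathlib

section
/- Local max-marginalization preserves calibration on an edge: if adjacent cliques C_i, C_j with sepset S satisfy max_{C_i\S} β(C_i) = μ(S) = max_{C_j\S} β(C_j), and a variable n ∈ S is removed by defining β' = max over states of n of β on each clique and μ' = max over states of n of μ, then max_{C_i'\S'} β'(C_i') = μ'(S') = max_{C_j'\S'} β'(C_j') where C_i' = C_i\{n}, C_j' = C_j\{n}, S' = S\{n}. -/
/-- `maxOver D A f` maximizes `f` over all assignments to the variables in `A`,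
leaving the remaining variables free. -/
noncomputable def maxOver {V : Type*} (D : V → Type*) (A : Finset V)
    (f : (∀ v, D v) → ℝ) : (∀ v, D v) → ℝ :=
  fun x => ⨆ y : {y : ∀ v, D v // ∀ v ∉ A, y v = x v}, f y.1

section aux

variable {V : Type*} [Fintype V] [DecidableEq V] {D : V → Type*}
    [∀ v, Fintype (D v)] [∀ v, Nonempty (D v)]

private instance (A : Finset V) (x : ∀ v, D v) :
    Nonempty {y : ∀ v, D v // ∀ v ∉ A, y v = x v} :=
  ⟨⟨x, fun _ _ => rfl⟩⟩

private lemma bdd (A : Finset V) (x : ∀ v, D v) (f : (∀ v, D v) → ℝ) :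
    BddAbove (Set.range fun y : {y : ∀ v, D v // ∀ v ∉ A, y v = x v} => f y.1) :=
  (Set.finite_range _).bddAbove

private lemma maxOver_union (A B : Finset V) (f : (∀ v, D v) → ℝ) (x : ∀ v, D v) :
    maxOver D A (maxOver D B f) x = maxOver D (A ∪ B) f x := by
  unfold maxOver
  apply le_antisymm
  · apply ciSup_le
    intro y
    apply ciSup_le
    intro z
    refine le_ciSup_of_le (bdd _ _ _) ⟨z.1, ?_⟩ le_rfl
    intro v hv
    simp only [Finset.mem_union, not_or] at hv
    rw [z.2 v hv.2, y.2 v hv.1]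
  · apply ciSup_le
    intro w
    refine le_ciSup_of_le (bdd A x (maxOver D B f))
      ⟨fun v => if v ∈ A then w.1 v else x v, fun v hv => if_neg hv⟩ ?_
    refine le_ciSup_of_le (bdd _ _ _) ⟨w.1, ?_⟩ le_rfl
    intro v hv
    by_cases hA : v ∈ A
    · simp [hA]
    · simp only [hA, if_false]
      exact w.2 v (by simp [hA, hv])

end aux

/-- local max-marginalization preserves calibration on an edge: if adjacent
cliques `Ci`, `Cj` with sepset `S = Ci ∩ Cj` are max-calibrated with sepset belief `μ`,
and a variable `n ∈ S` is removed by maximizing the beliefs over the states of `n`, then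
the resulting cliques `Ci \ {n}`, `Cj \ {n}` with sepset `S \ {n}` are max-calibrated
with sepset belief `max over n.states of μ`. -/
theorem local_max_marginalization_preserves_calibration
    {V : Type*} [Fintype V] [DecidableEq V] {D : V → Type*}
    [∀ v, Fintype (D v)] [∀ v, Nonempty (D v)]
    (Ci Cj S : Finset V) (hS : S = Ci ∩ Cj) (n : V) (hn : n ∈ S)
    (βi βj μ : (∀ v, D v) → ℝ)
    (hβi0 : ∀ x, 0 ≤ βi x) (hβj0 : ∀ x, 0 ≤ βj x) (hμ0 : ∀ x, 0 ≤ μ x)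
    (hcali : ∀ x, maxOver D (Ci \ S) βi x = μ x)
    (hcalj : ∀ x, maxOver D (Cj \ S) βj x = μ x) :
    (∀ x, maxOver D ((Ci \ {n}) \ (S \ {n})) (maxOver D {n} βi) x =
        maxOver D {n} μ x) ∧
    (∀ x, maxOver D ((Cj \ {n}) \ (S \ {n})) (maxOver D {n} βj) x =
        maxOver D {n} μ x) := by
  have hni : n ∈ Ci := (Finset.mem_inter.mp (hS ▸ hn)).1
  have hnj : n ∈ Cj := (Finset.mem_inter.mp (hS ▸ hn)).2
  have key : ∀ (C : Finset V), n ∈ C → ∀ (β : (∀ v, D v) → ℝ),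
      (∀ x, maxOver D (C \ S) β x = μ x) →
      ∀ x, maxOver D ((C \ {n}) \ (S \ {n})) (maxOver D {n} β) x = maxOver D {n} μ x := by
    intro C hnC β hcal x
    have hset : (C \ {n}) \ (S \ {n}) = C \ S := by
      ext v
      simp only [Finset.mem_sdiff, Finset.mem_singleton]
      constructor
      · rintro ⟨⟨hvC, hvn⟩, h⟩
        exact ⟨hvC, fun hvS => h ⟨hvS, hvn⟩⟩
      · rintro ⟨hvC, hvS⟩
        refine ⟨⟨hvC, fun h => hvS (h ▸ hn)⟩, fun h => hvS h.1⟩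
    rw [hset, maxOver_union, Finset.union_comm, ← maxOver_union,
      show maxOver D (C \ S) β = μ from funext hcal]
  exact ⟨key Ci hni βi hcali, key Cj hnj βj hcalj⟩
end

section
/- In a tree, removing a vertex set from node labels while keeping a label only on a connected subtree preserves the running intersection property: if T is a tree with vertex labels given by finite sets and satisfies that each element's support is connected, and for an element n we replace its support by a connected subtree of the original support, the resulting labeling still has connected supports for all elements. -/
/-- Running intersection property of a labeled tree: for every element, the nodes whose
label contains it induce a connected subgraph. -/
def RIP {ι V : Type*} (G : SimpleGraph ι) (C : ι → Finset V) : Prop :=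
  ∀ (v : V) (a b : ι) (ha : v ∈ C a) (hb : v ∈ C b),
    (G.induce {t | v ∈ C t}).Reachable ⟨a, ha⟩ ⟨b, hb⟩

lemma reach_congr {ι : Type*} (G : SimpleGraph ι) {S S' : Set ι} (h : S = S')
    {a b : ι} (ha : a ∈ S) (hb : b ∈ S)
    (hr : (G.induce S).Reachable ⟨a, ha⟩ ⟨b, hb⟩)
    (ha' : a ∈ S') (hb' : b ∈ S') :
    (G.induce S').Reachable ⟨a, ha'⟩ ⟨b, hb'⟩ := by
  subst h; exact hr

/-- in a tree with finite-set labels satisfying the running intersection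
property, replacing the support of an element `n` by a connected subtree `R` of its
original support (i.e. removing `n` from the labels outside `R`) preserves the running
intersection property for all elements. -/
theorem rip_preserved_by_connected_retention
    {ι V : Type*} [DecidableEq V] (G : SimpleGraph ι) (hT : G.IsTree)
    (C : ι → Finset V) (hRIP : RIP G C)
    (n : V) (R : Set ι)
    (hRsupp : ∀ i ∈ R, n ∈ C i)
    (hRconn : ∀ (a b : ι) (ha : a ∈ R) (hb : b ∈ R),
      (G.induce R).Reachable ⟨a, ha⟩ ⟨b, hb⟩)
    (C' : ι → Finset V)
    (hkeep : ∀ i ∈ R, C' i = C i)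
    (hdrop : ∀ i, i ∉ R → C' i = C i \ {n}) :
    RIP G C' := by
  intro v a b ha hb
  by_cases hv : v = n
  · subst hv
    have hset : ({t | v ∈ C' t} : Set ι) = R := by
      ext t
      simp only [Set.mem_setOf_eq]
      constructor
      · intro ht
        by_contra hR
        rw [hdrop t hR] at ht
        simp at ht
      · intro ht
        rw [hkeep t ht]
        exact hRsupp t ht
    have haR : a ∈ R := (Set.ext_iff.mp hset a).mp ha
    have hbR : b ∈ R := (Set.ext_iff.mp hset b).mp hb
    exact reach_congr G hset.symm haR hbR (hRconn a b haR hbR) ha hb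
  · have hset : ({t | v ∈ C' t} : Set ι) = {t | v ∈ C t} := by
      ext t
      simp only [Set.mem_setOf_eq]
      by_cases hR : t ∈ R
      · rw [hkeep t hR]
      · rw [hdrop t hR]
        simp [hv]
    have haC : v ∈ C a := (Set.ext_iff.mp hset a).mp ha
    have hbC : v ∈ C b := (Set.ext_iff.mp hset b).mp hb
    exact reach_congr G hset.symm haC hbC (hRIP v a b haC hbC) ha hb
end

section
/- Reparameterization by calibrated beliefs preserves the distribution: for a calibrated clique tree where each clique belief β(C) is the max-marginal of P and each sepset belief μ(S) is the max-marginal of P onto S, the product ∏_C β(C) / ∏_S μ(S) over cliques and sepsets of the tree equals P, provided P factorizes according to the clique tree. -/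
open Finset

theorem DependsOn.mul {ι M : Type*} {α : ι → Type*} [Mul M] {f g : (∀ i, α i) → M} {s : Set ι}
    (hf : DependsOn f s) (hg : DependsOn g s) : DependsOn (f * g) s :=
  fun _ _ h => by simp only [Pi.mul_apply, hf h, hg h]

theorem DependsOn.finset_prod {ι κ M : Type*} {α : ι → Type*} [CommMonoid M]
    {f : κ → (∀ i, α i) → M} {s : Set ι} {t : Finset κ} (hf : ∀ k ∈ t, DependsOn (f k) s) :
    DependsOn (∏ k ∈ t, f k) s :=
  fun _ _ h => by simp only [Finset.prod_apply]; exact prod_congr rfl fun k hk => hf k hk h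

section MaxOver

variable {V : Type*} {D : V → Type*} {A B : Finset V} {T : Set V} {f h : (∀ v, D v) → ℝ}
  {x : ∀ v, D v}

theorem maxOver_le {c : ℝ} (hc : ∀ y : ∀ v, D v, (∀ v ∉ A, y v = x v) → f y ≤ c) :
    maxOver D A f x ≤ c :=
  have : Nonempty {y : ∀ v, D v // ∀ v ∉ A, y v = x v} := ⟨⟨x, fun _ _ => rfl⟩⟩
  ciSup_le fun y => hc y.1 y.2

variable [Fintype V] [∀ v, Fintype (D v)]

theorem le_maxOver (y : ∀ v, D v) (hy : ∀ v ∉ A, y v = x v) : f y ≤ maxOver D A f x :=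
  le_ciSup (f := fun y : {y : ∀ v, D v // ∀ v ∉ A, y v = x v} => f y.1)
    (Set.finite_range _).bddAbove ⟨y, hy⟩

theorem le_maxOver_self : f x ≤ maxOver D A f x := le_maxOver x fun _ _ => rfl

theorem exists_maxOver_eq : ∃ y : ∀ v, D v, (∀ v ∉ A, y v = x v) ∧ maxOver D A f x = f y := by
  have : Nonempty {y : ∀ v, D v // ∀ v ∉ A, y v = x v} := ⟨⟨x, fun _ _ => rfl⟩⟩
  obtain ⟨y, hy⟩ := Finite.exists_max fun y : {y : ∀ v, D v // ∀ v ∉ A, y v = x v} => f y.1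
  exact ⟨y.1, y.2, le_antisymm (maxOver_le fun z hz => hy ⟨z, hz⟩) (le_maxOver y.1 y.2)⟩

theorem maxOver_eq_self_of_dependsOn (hf : DependsOn f (↑A)ᶜ) : maxOver D A f = f := by
  ext x
  exact le_antisymm (maxOver_le fun y hy => (hf fun v hv => hy v hv).le) le_maxOver_self

theorem maxOver_mul_of_dependsOn (hh : DependsOn h (↑A)ᶜ) (hh₀ : 0 ≤ h) :
    maxOver D A (f * h) = maxOver D A f * h := by
  ext x
  have hconst : ∀ y : ∀ v, D v, (∀ v ∉ A, y v = x v) → h y = h x := fun y hy => hh hy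
  obtain ⟨y, hy, hmax⟩ := exists_maxOver_eq (f := f) (A := A) (x := x)
  refine le_antisymm (maxOver_le fun z hz => ?_) ?_
  · simp only [Pi.mul_apply, hconst z hz]
    exact mul_le_mul_of_nonneg_right (le_maxOver z hz) (hh₀ x)
  · simp only [Pi.mul_apply, hmax, ← hconst y hy]
    exact le_maxOver (f := f * h) y hy

variable [DecidableEq V]

theorem maxOver_maxOver : maxOver D A (maxOver D B f) = maxOver D (A ∪ B) f := by
  ext x
  refine le_antisymm (maxOver_le fun y hy => maxOver_le fun z hz => le_maxOver z fun v hv => ?_)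
    (maxOver_le fun z hz => ?_)
  · rw [mem_union, not_or] at hv
    rw [hz v hv.2, hy v hv.1]
  · let y : ∀ v, D v := fun v => if v ∈ A then z v else x v
    calc f z ≤ maxOver D B f y := le_maxOver z fun v hv => by
            by_cases hA : v ∈ A
            · simp [y, hA]
            · simp [y, hA, hz v (by simp [hA, hv])]
      _ ≤ maxOver D A (maxOver D B f) x := le_maxOver y fun v hv => by simp [y, hv]

theorem dependsOn_maxOver (hf : DependsOn f T) : DependsOn (maxOver D A f) (T \ A) := by
  suffices key : ∀ x y : ∀ v, D v, (∀ v ∈ T \ ↑A, x v = y v) →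
      maxOver D A f x ≤ maxOver D A f y from
    fun x y hxy => (key x y hxy).antisymm (key y x fun v hv => (hxy v hv).symm)
  intro x y hxy
  refine maxOver_le fun z hz => ?_
  let z' : ∀ v, D v := fun v => if v ∈ A then z v else y v
  calc f z = f z' := hf fun v hv => by
          by_cases hA : v ∈ A
          · simp [z', hA]
          · simp [z', hA, hz v hA, hxy v ⟨hv, hA⟩]
    _ ≤ maxOver D A f y := le_maxOver z' fun v hv => by simp [z', hv]

end MaxOver

section MaxMarginal

variable {V : Type*} [Fintype V] [DecidableEq V] {D : V → Type*} [∀ v, Fintype (D v)]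
  {A C S W : Finset V} {f ψ Q : (∀ v, D v) → ℝ}

noncomputable def maxMarginal (D : V → Type*) (C : Finset V) (f : (∀ v, D v) → ℝ) :
    (∀ v, D v) → ℝ :=
  maxOver D (univ \ C) f

theorem maxMarginal_maxOver_of_disjoint (h : Disjoint W A) :
    maxMarginal D W (maxOver D A f) = maxMarginal D W f := by
  rw [maxMarginal, maxOver_maxOver, union_eq_left.2 (subset_sdiff.2 ⟨subset_univ A, h.symm⟩)]
  rfl

theorem maxMarginal_mul_maxOver_sdiff (hψ : DependsOn ψ ↑C) (hQ : DependsOn Q (↑(C \ S))ᶜ)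
    (hψ₀ : 0 ≤ ψ) (hQ₀ : 0 ≤ Q) :
    maxMarginal D C (ψ * Q) * maxOver D (C \ S) (ψ * Q) =
      maxMarginal D (C ∩ S) (ψ * Q) * (ψ * Q) := by
  have hψ' : DependsOn ψ (↑(univ \ C))ᶜ := hψ.mono fun v hv => by simp [hv]
  have hψs : DependsOn (maxOver D (C \ S) ψ) (↑(univ \ C))ᶜ :=
    (dependsOn_maxOver hψ).mono fun v hv => by simp_all
  have hψs₀ : 0 ≤ maxOver D (C \ S) ψ := fun _ => (hψ₀ _).trans le_maxOver_self
  have hleaf : maxOver D (C \ S) (ψ * Q) = maxOver D (C \ S) ψ * Q :=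
    maxOver_mul_of_dependsOn hQ hQ₀
  have hclique : maxMarginal D C (ψ * Q) = maxMarginal D C Q * ψ := by
    rw [mul_comm]
    exact maxOver_mul_of_dependsOn hψ' hψ₀
  have hsep : maxMarginal D (C ∩ S) (ψ * Q) = maxMarginal D C Q * maxOver D (C \ S) ψ := by
    have hunion : univ \ (C ∩ S) = (univ \ C) ∪ (C \ S) := by
      ext v
      by_cases hC : v ∈ C <;> simp [hC]
    rw [maxMarginal, hunion, ← maxOver_maxOver, hleaf, mul_comm]
    exact maxOver_mul_of_dependsOn hψs hψs₀
  rw [hclique, hleaf, hsep]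
  ring

end MaxMarginal

namespace SimpleGraph

variable {ι : Type*} {G : SimpleGraph ι} {i j : ι}

theorem reachable_induce_iff {s : Set ι} {a b : s} :
    (G.induce s).Reachable a b ↔ ∃ p : G.Walk a b, ∀ t ∈ p.support, t ∈ s := by
  refine ⟨fun ⟨p⟩ => ?_, fun ⟨p, hp⟩ => ⟨p.induce s hp⟩⟩
  refine ⟨p.map (Embedding.induce s).toHom, fun t ht => ?_⟩
  obtain ⟨u, -, rfl⟩ := List.mem_map.1 (Walk.support_map _ p ▸ ht)
  exact u.2

theorem IsTree.exists_leaf [Fintype ι] [DecidableRel G.Adj] [Nontrivial ι] (hT : G.IsTree) :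
    ∃ i j, G.Adj i j ∧ (∀ k, G.Adj i k → k = j) ∧ (G.induce {i}ᶜ).IsTree := by
  obtain ⟨i, hi⟩ := hT.exists_vert_degree_one_of_nontrivial
  obtain ⟨j, hij, hleaf⟩ := degree_eq_one_iff_existsUnique_adj.1 hi
  exact ⟨i, j, hij, hleaf, hT.connected.induce_compl_singleton_of_degree_eq_one hi,
    hT.isAcyclic.induce _⟩

theorem prod_edgeFinset_eq_mul_prod_induce_compl_singleton [Fintype ι] [DecidableEq ι]
    [DecidableRel G.Adj] {M : Type*} [CommMonoid M] (f : Sym2 ι → M) (hij : G.Adj i j)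
    (hleaf : ∀ k, G.Adj i k → k = j) :
    ∏ e ∈ G.edgeFinset, f e = f s(i, j) * ∏ e ∈ (G.induce {i}ᶜ).edgeFinset, f (e.map (↑)) := by
  rw [← mul_prod_erase _ _ (G.mem_edgeFinset.2 (G.mem_edgeSet.2 hij))]
  congr 1
  calc ∏ e ∈ G.edgeFinset.erase s(i, j), f e
      = ∏ e ∈ G.edgeFinset ∩ ({i}ᶜ : Set ι).toFinset.sym2, f e := by
        congr 1
        ext e
        induction e using Sym2.ind with | h a b => ?_
        simp only [mem_erase, ne_eq, Sym2.eq_iff, not_or, not_and, mem_edgeFinset, mem_edgeSet,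
          mem_inter, mk_mem_sym2_iff, Set.mem_toFinset, Set.mem_compl_singleton_iff]
        constructor
        · rintro ⟨⟨hai, hbi⟩, hab⟩
          exact ⟨hab, fun ha => hai ha (hleaf b (ha ▸ hab)),
            fun hb => hbi (hleaf a (hb ▸ hab.symm)) hb⟩
        · rintro ⟨hab, ha, hb⟩
          exact ⟨⟨fun h => absurd h ha, fun _ => hb⟩, hab⟩
    _ = _ := by rw [← map_edgeFinset_induce, prod_map]; rfl

end SimpleGraph

section RunningIntersection

variable {ι V : Type*} {G : SimpleGraph ι} {Cl : ι → Finset V} {i j k : ι}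

theorem RIP.exists_walk (hRIP : RIP G Cl) {v : V} {a b : ι} (ha : v ∈ Cl a) (hb : v ∈ Cl b) :
    ∃ p : G.Walk a b, ∀ t ∈ p.support, v ∈ Cl t :=
  SimpleGraph.reachable_induce_iff.1 (hRIP v a b ha hb)

theorem RIP.disjoint_sdiff_of_leaf [DecidableEq V] (hRIP : RIP G Cl)
    (hleaf : ∀ k, G.Adj i k → k = j) (hk : k ≠ i) : Disjoint (Cl k) (Cl i \ Cl j) := by
  refine disjoint_left.2 fun v hvk hv => (mem_sdiff.1 hv).2 ?_
  obtain ⟨p, hp⟩ := hRIP.exists_walk (mem_sdiff.1 hv).1 hvk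
  cases p with
  | nil => exact absurd rfl hk
  | cons hadj q => exact hleaf _ hadj ▸ hp _ (by simp)

theorem RIP.induce_compl_singleton [DecidableEq ι] (hRIP : RIP G Cl)
    (hleaf : ∀ k, G.Adj i k → k = j) : RIP (G.induce {i}ᶜ) fun k => Cl k := by
  intro v a b ha hb
  obtain ⟨p, hp⟩ := hRIP.exists_walk ha hb
  have hq : i ∉ p.toPath.1.support :=
    p.toPath.2.isTrail.not_mem_support_of_subsingleton_neighborSet (Ne.symm a.2) (Ne.symm b.2)
      fun a ha b hb => (hleaf a ha).trans (hleaf b hb).symm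
  refine SimpleGraph.reachable_induce_iff.2 ⟨p.toPath.1.induce {i}ᶜ fun t ht h => hq (h ▸ ht), ?_⟩
  intro t ht
  rw [SimpleGraph.Walk.support_induce, List.mem_attachWith] at ht
  exact hp t (p.support_toPath_subset_support ht)

end RunningIntersection

def sepset {ι V : Type*} [DecidableEq V] (Cl : ι → Finset V) : Sym2 ι → Finset V :=
  Sym2.lift ⟨fun a b => Cl a ∩ Cl b, fun _ _ => inter_comm _ _⟩

@[simp]
theorem sepset_mk {ι V : Type*} [DecidableEq V] (Cl : ι → Finset V) (a b : ι) :
    sepset Cl s(a, b) = Cl a ∩ Cl b :=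
  rfl

def HasNonnegFactorization {ι V : Type*} [Fintype ι] {D : V → Type*} (Cl : ι → Finset V)
    (P : (∀ v, D v) → ℝ) : Prop :=
  ∃ ψ : ι → (∀ v, D v) → ℝ, (∀ k, DependsOn (ψ k) ↑(Cl k)) ∧ (∀ k, 0 ≤ ψ k) ∧ P = ∏ k, ψ k

theorem HasNonnegFactorization.of_factors {ι κ V : Type*} [Fintype ι] [Fintype κ]
    {D : V → Type*} {Cl : ι → Finset V} {P : (∀ v, D v) → ℝ} (hP : 0 ≤ P)
    (φ : κ → (∀ v, D v) → ℝ) (asg : κ → ι) (hφ : ∀ c, DependsOn (φ c) ↑(Cl (asg c)))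
    (hPφ : ∀ x, P x = ∏ c, φ c x) : HasNonnegFactorization Cl P := by
  classical
  refine ⟨fun k => ∏ c ∈ univ.filter (asg · = k), fun y => |φ c y|, fun k => ?_,
    fun k x => ?_, ?_⟩
  · refine DependsOn.finset_prod fun c hc => ?_
    rw [(mem_filter.1 hc).2.symm]
    exact fun x y h => congrArg abs (hφ c h)
  · simp only [Finset.prod_apply]
    exact prod_nonneg fun c _ => abs_nonneg _
  · ext x
    rw [← abs_of_nonneg (hP x), hPφ, Finset.prod_apply, abs_prod]
    simp only [Finset.prod_apply]
    exact (prod_fiberwise univ asg _).symm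

section Reparameterization

variable {V : Type*} [Fintype V] [DecidableEq V] {D : V → Type*} [∀ v, Fintype (D v)]
  {ι : Type*} [Fintype ι] {G : SimpleGraph ι} {Cl : ι → Finset V}
  {P : (∀ v, D v) → ℝ} {ψ : ι → (∀ v, D v) → ℝ} {i j : ι}

section Leaf

variable [DecidableEq ι] (hRIP : RIP G Cl) (hleaf : ∀ k, G.Adj i k → k = j)
  (hψ : ∀ k, DependsOn (ψ k) ↑(Cl k)) (hψ₀ : ∀ k, 0 ≤ ψ k)
include hRIP hleaf hψ

omit [Fintype V] [∀ v, Fintype (D v)] in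
theorem RIP.dependsOn_prod_compl_leaf :
    DependsOn (∏ k : ({i}ᶜ : Set ι), ψ k) (↑(Cl i \ Cl j))ᶜ :=
  DependsOn.finset_prod fun k _ => (hψ k).mono fun _ hv =>
    disjoint_left.1 (hRIP.disjoint_sdiff_of_leaf hleaf k.2) hv

include hψ₀

theorem RIP.maxMarginal_mul_maxOver_leaf :
    maxMarginal D (Cl i) (∏ k, ψ k) * maxOver D (Cl i \ Cl j) (∏ k, ψ k) =
      maxMarginal D (Cl i ∩ Cl j) (∏ k, ψ k) * ∏ k, ψ k := by
  have hP : ∏ k, ψ k = ψ i * ∏ k : ({i}ᶜ : Set ι), ψ k := Fintype.prod_eq_mul_prod_subtype_ne _ i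
  rw [hP]
  exact maxMarginal_mul_maxOver_sdiff (hψ i) (hRIP.dependsOn_prod_compl_leaf hleaf hψ) (hψ₀ i)
    (prod_nonneg fun k _ => hψ₀ k)

theorem RIP.hasNonnegFactorization_maxOver_leaf (hij : G.Adj i j) :
    HasNonnegFactorization (fun k : ({i}ᶜ : Set ι) => Cl k)
      (maxOver D (Cl i \ Cl j) (∏ k, ψ k)) := by
  refine ⟨fun k => ψ k * if k.1 = j then maxOver D (Cl i \ Cl j) (ψ i) else 1,
    fun k => (hψ k).mul ?_, fun k => mul_nonneg (hψ₀ k) ?_, ?_⟩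
  · split_ifs with hk
    · exact (dependsOn_maxOver (hψ i)).mono fun v hv => by simp_all
    · exact (dependsOn_const 1).mono (Set.empty_subset _)
  · split_ifs
    · exact fun x => (hψ₀ i x).trans le_maxOver_self
    · exact zero_le_one
  · have hP : ∏ k, ψ k = ψ i * ∏ k : ({i}ᶜ : Set ι), ψ k :=
      Fintype.prod_eq_mul_prod_subtype_ne _ i
    rw [hP, maxOver_mul_of_dependsOn (hRIP.dependsOn_prod_compl_leaf hleaf hψ)
      (prod_nonneg fun k _ => hψ₀ k), prod_mul_distrib, mul_comm,
      Fintype.prod_eq_single ⟨j, (G.ne_of_adj hij).symm⟩ fun k hk =>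
        if_neg fun h => hk (Subtype.ext h), if_pos rfl]

theorem prod_maxMarginal_of_leaf [DecidableRel G.Adj] (hij : G.Adj i j)
    (ih : ∏ k : ({i}ᶜ : Set ι), maxMarginal D (Cl k) (maxOver D (Cl i \ Cl j) (∏ k, ψ k)) =
      maxOver D (Cl i \ Cl j) (∏ k, ψ k) * ∏ e ∈ (G.induce {i}ᶜ).edgeFinset,
        maxMarginal D (sepset (fun k : ({i}ᶜ : Set ι) => Cl k) e)
          (maxOver D (Cl i \ Cl j) (∏ k, ψ k))) :
    ∏ k, maxMarginal D (Cl k) (∏ k, ψ k) =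
      (∏ k, ψ k) * ∏ e ∈ G.edgeFinset, maxMarginal D (sepset Cl e) (∏ k, ψ k) := by
  set P := ∏ k, ψ k
  set L := Cl i \ Cl j
  have hdisj (k : ({i}ᶜ : Set ι)) : Disjoint (Cl k) L := hRIP.disjoint_sdiff_of_leaf hleaf k.2
  have hsep : ∀ e ∈ (G.induce {i}ᶜ).edgeFinset,
      maxMarginal D (sepset (fun k : ({i}ᶜ : Set ι) => Cl k) e) (maxOver D L P) =
        maxMarginal D (sepset Cl (e.map (↑))) P := by
    intro e _
    induction e using Sym2.ind with
    | h a b => exact maxMarginal_maxOver_of_disjoint ((hdisj a).mono_left inter_subset_left)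
  calc ∏ k, maxMarginal D (Cl k) P
      = maxMarginal D (Cl i) P * ∏ k : ({i}ᶜ : Set ι), maxMarginal D (Cl k) (maxOver D L P) := by
        simp only [maxMarginal_maxOver_of_disjoint (hdisj _)]
        exact Fintype.prod_eq_mul_prod_subtype_ne _ i
    _ = maxMarginal D (Cl i) P * maxOver D L P *
          ∏ e ∈ (G.induce {i}ᶜ).edgeFinset, maxMarginal D (sepset Cl (e.map (↑))) P := by
        rw [ih, prod_congr rfl hsep, mul_assoc]
    _ = P * ∏ e ∈ G.edgeFinset, maxMarginal D (sepset Cl e) P := by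
        rw [hRIP.maxMarginal_mul_maxOver_leaf hleaf hψ hψ₀,
          SimpleGraph.prod_edgeFinset_eq_mul_prod_induce_compl_singleton _ hij hleaf, sepset_mk]
        ring

end Leaf

variable [DecidableRel G.Adj]

theorem prod_maxMarginal_of_subsingleton [Subsingleton ι] (hT : G.IsTree)
    (hP : HasNonnegFactorization Cl P) :
    ∏ k, maxMarginal D (Cl k) P = P * ∏ e ∈ G.edgeFinset, maxMarginal D (sepset Cl e) P := by
  obtain ⟨ψ, hψ, -, rfl⟩ := hP
  obtain ⟨i⟩ := hT.connected.nonempty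
  have hG : G.edgeFinset = ∅ := SimpleGraph.edgeFinset_eq_empty.2 (Subsingleton.elim _ _)
  rw [hG, prod_empty, mul_one, Fintype.prod_subsingleton _ i, Fintype.prod_subsingleton _ i]
  exact maxOver_eq_self_of_dependsOn <| (hψ i).mono fun v hv => by simp [hv]

theorem prod_maxMarginal_eq_mul_prod_maxMarginal_sepset (hT : G.IsTree) (hRIP : RIP G Cl)
    (hP : HasNonnegFactorization Cl P) :
    ∏ k, maxMarginal D (Cl k) P = P * ∏ e ∈ G.edgeFinset, maxMarginal D (sepset Cl e) P := by
  classical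
  induction hcard : Fintype.card ι using Nat.strong_induction_on generalizing ι P with
  | _ n ih =>
  rcases subsingleton_or_nontrivial ι with hι | hι
  · exact prod_maxMarginal_of_subsingleton hT hP
  obtain ⟨i, j, hij, hleaf, hT'⟩ := hT.exists_leaf
  obtain ⟨ψ, hψ, hψ₀, rfl⟩ := hP
  refine prod_maxMarginal_of_leaf hRIP hleaf hψ hψ₀ hij (ih _ ?_ hT'
    (hRIP.induce_compl_singleton hleaf) (hRIP.hasNonnegFactorization_maxOver_leaf hleaf hψ hψ₀ hij)
    rfl)
  exact hcard ▸ Fintype.card_subtype_lt (x := i) (by simp)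

end Reparameterization

theorem reparameterization_preserves_distribution_general
    {V : Type*} [Fintype V] [DecidableEq V] {D : V → Type*}
    [∀ v, Fintype (D v)]
    {ι : Type*} [Fintype ι]
    (G : SimpleGraph ι) [DecidableRel G.Adj] (hT : G.IsTree)
    (Cl : ι → Finset V) (hRIP : RIP G Cl)
    (P : (∀ v, D v) → ℝ) (hP : ∀ x, 0 < P x)
    -- P factorizes according to the clique tree: a product of factors, each with scope
    -- contained in some clique
    (hfact : ∃ (κ : Type) (_ : Fintype κ) (φ : κ → (∀ v, D v) → ℝ) (asg : κ → ι),
      (∀ k x y, (∀ v ∈ Cl (asg k), x v = y v) → φ k x = φ k y) ∧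
      (∀ x, P x = ∏ k, φ k x))
    -- sepset beliefs: for each edge, the max-marginal of P onto the sepset
    (μ : Sym2 ι → (∀ v, D v) → ℝ)
    (hμ : ∀ i j, G.Adj i j →
      ∀ x, μ s(i, j) x = maxOver D (Finset.univ \ (Cl i ∩ Cl j)) P x) :
    ∀ x, (∏ i, maxOver D (Finset.univ \ Cl i) P x) / (∏ e ∈ G.edgeFinset, μ e x)
      = P x := by
  intro x
  obtain ⟨κ, _, φ, asg, hφ, hPφ⟩ := hfact
  have hPfact : HasNonnegFactorization Cl P :=
    .of_factors (fun x => (hP x).le) φ asg (fun c _ _ h => hφ c _ _ h) hPφ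
  have hμP : ∀ e ∈ G.edgeFinset, μ e x = maxMarginal D (sepset Cl e) P x := by
    intro e he
    induction e using Sym2.ind with
    | h a b => exact hμ a b (SimpleGraph.mem_edgeFinset.1 he) x
  have hμ₀ : 0 < ∏ e ∈ G.edgeFinset, maxMarginal D (sepset Cl e) P x :=
    prod_pos fun e _ => (hP x).trans_le le_maxOver_self
  rw [prod_congr rfl hμP, div_eq_iff hμ₀.ne']
  simpa only [Finset.prod_apply, Pi.mul_apply, maxMarginal] using
    congrFun (prod_maxMarginal_eq_mul_prod_maxMarginal_sepset hT hRIP hPfact) x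

/-- reparameterization by calibrated beliefs preserves the distribution:
for a strictly positive `P` factorizing according to a valid clique tree, the product of
the clique beliefs (the max-marginals of `P` onto the cliques) divided by the product of
the sepset beliefs (the max-marginals of `P` onto the sepsets) equals `P`. -/
theorem reparameterization_preserves_distribution
    {V : Type*} [Fintype V] [DecidableEq V] {D : V → Type*}
    [∀ v, Fintype (D v)] [∀ v, Nonempty (D v)]
    {ι : Type*} [Fintype ι] [DecidableEq ι]
    (G : SimpleGraph ι) [DecidableRel G.Adj] (hT : G.IsTree)
    (Cl : ι → Finset V) (hRIP : RIP G Cl)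
    (P : (∀ v, D v) → ℝ) (hP : ∀ x, 0 < P x)
    -- P factorizes according to the clique tree: a product of factors, each with scope
    -- contained in some clique
    (hfact : ∃ (κ : Type) (_ : Fintype κ) (φ : κ → (∀ v, D v) → ℝ) (asg : κ → ι),
      (∀ k x y, (∀ v ∈ Cl (asg k), x v = y v) → φ k x = φ k y) ∧
      (∀ x, P x = ∏ k, φ k x))
    -- sepset beliefs: for each edge, the max-marginal of P onto the sepset
    (μ : Sym2 ι → (∀ v, D v) → ℝ)
    (hμ : ∀ i j, G.Adj i j →
      ∀ x, μ s(i, j) x = maxOver D (Finset.univ \ (Cl i ∩ Cl j)) P x) :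
    ∀ x, (∏ i, maxOver D (Finset.univ \ Cl i) P x) / (∏ e ∈ G.edgeFinset, μ e x)
      = P x :=
  reparameterization_preserves_distribution_general G hT Cl hRIP P hP hfact μ hμ
end

section
/- Removing a non-maximal clique and reconnecting its neighbors to a containing clique preserves validity: if in a valid clique tree a clique C_i satisfies C_i ⊆ C_j for an adjacent clique C_j, then deleting C_i and connecting all other neighbors of C_i directly to C_j yields a tree that still satisfies the running intersection property with the same sepsets among remaining cliques. -/
namespace SimpleGraph

theorem Reachable.map_of_forall_adj {α β : Type*} {A : SimpleGraph α} {B : SimpleGraph β}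
    (f : α → β) (h : ∀ u w, A.Adj u w → B.Reachable (f u) (f w)) {u w : α}
    (huw : A.Reachable u w) : B.Reachable (f u) (f w) := by
  rw [reachable_iff_reflTransGen] at huw ⊢
  exact Relation.ReflTransGen.lift' f (fun u w h' => (reachable_iff_reflTransGen ..).1 (h u w h'))
    _ _ huw

variable {ι : Type*} {G : SimpleGraph ι} {i j : ι}

variable (G) in
def mergeInto (i j : ι) : SimpleGraph {t : ι // t ≠ i} :=
  fromRel fun a b => G.Adj a.1 b.1 ∨ (a.1 = j ∧ G.Adj b.1 i) ∨ (b.1 = j ∧ G.Adj a.1 i)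

theorem mergeInto_adj {a b : {t : ι // t ≠ i}} :
    (G.mergeInto i j).Adj a b ↔
      a ≠ b ∧ (G.Adj a.1 b.1 ∨ (a.1 = j ∧ G.Adj b.1 i) ∨ (b.1 = j ∧ G.Adj a.1 i)) := by
  rw [mergeInto, fromRel_adj]
  grind [adj_comm]

open Classical in
noncomputable def mergeIntoMap (hji : j ≠ i) (t : ι) : {t : ι // t ≠ i} :=
  if h : t = i then ⟨j, hji⟩ else ⟨t, h⟩

@[simp]
theorem mergeIntoMap_self (hji : j ≠ i) : mergeIntoMap hji i = ⟨j, hji⟩ := by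
  simp [mergeIntoMap]

theorem mergeIntoMap_of_ne (hji : j ≠ i) {t : ι} (ht : t ≠ i) :
    mergeIntoMap hji t = ⟨t, ht⟩ := by
  simp [mergeIntoMap, ht]

@[simp]
theorem mergeIntoMap_val (hji : j ≠ i) (a : {t : ι // t ≠ i}) : mergeIntoMap hji a.1 = a :=
  mergeIntoMap_of_ne hji a.2

theorem mergeIntoMap_eq_or_adj (hji : j ≠ i) {u w : ι} (huw : G.Adj u w) :
    mergeIntoMap hji u = mergeIntoMap hji w ∨
      (G.mergeInto i j).Adj (mergeIntoMap hji u) (mergeIntoMap hji w) := by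
  refine or_iff_not_imp_left.2 fun hne => mergeInto_adj.2 ⟨hne, ?_⟩
  by_cases hu : u = i
  · subst hu
    simp [mergeIntoMap_of_ne hji huw.ne', huw.symm]
  by_cases hw : w = i
  · subst hw
    simp [mergeIntoMap_of_ne hji hu, huw]
  · simp [mergeIntoMap_of_ne hji hu, mergeIntoMap_of_ne hji hw, huw]

theorem Reachable.mergeIntoMap (hji : j ≠ i) {u w : ι} (huw : G.Reachable u w) :
    (G.mergeInto i j).Reachable (mergeIntoMap hji u) (mergeIntoMap hji w) := by
  refine huw.map_of_forall_adj _ fun u w h => ?_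
  rcases mergeIntoMap_eq_or_adj hji h with h' | h'
  · rw [h']
  · exact h'.reachable

theorem Connected.mergeInto (hji : j ≠ i) (hG : G.Connected) : (G.mergeInto i j).Connected := by
  have : Nonempty {t : ι // t ≠ i} := ⟨⟨j, hji⟩⟩
  refine ⟨fun a b => ?_⟩
  simpa using (hG.preconnected a.1 b.1).mergeIntoMap hji

theorem exists_adj_of_mergeInto_adj (hji : j ≠ i) {a b : {t : ι // t ≠ i}}
    (hab : (G.mergeInto i j).Adj a b) :
    ∃ x y, G.Adj x y ∧ mergeIntoMap hji x = a ∧ mergeIntoMap hji y = b := by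
  obtain ⟨-, h | ⟨ha, h⟩ | ⟨hb, h⟩⟩ := mergeInto_adj.1 hab
  · exact ⟨a, b, h, mergeIntoMap_val hji a, mergeIntoMap_val hji b⟩
  · exact ⟨i, b, h.symm, by rw [mergeIntoMap_self]; exact Subtype.ext ha.symm,
      mergeIntoMap_val hji b⟩
  · exact ⟨a, i, h, mergeIntoMap_val hji a,
      by rw [mergeIntoMap_self]; exact Subtype.ext hb.symm⟩

theorem reachable_deleteEdges_mergeIntoMap (hij : G.Adj i j) {e : Sym2 ι} (he : e ≠ s(i, j))
    (x : ι) : (G.deleteEdges {e}).Reachable x (mergeIntoMap hij.ne' x) := by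
  by_cases hx : x = i
  · subst hx
    rw [mergeIntoMap_self]
    exact (deleteEdges_adj.2 ⟨hij, by simpa using he.symm⟩).reachable
  · rw [mergeIntoMap_of_ne _ hx]

theorem reachable_deleteEdges_of_mergeInto_adj (hij : G.Adj i j) {u w : {t : ι // t ≠ i}}
    (huw : (G.mergeInto i j).Adj u w) {e : Sym2 ι} (he : e ≠ s(i, j))
    (hmap : e.map (mergeIntoMap hij.ne') ≠ s(u, w)) : (G.deleteEdges {e}).Reachable u.1 w.1 := by
  have hedge {x y : ι} (hxy : G.Adj x y) (he' : e ≠ s(x, y)) :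
      (G.deleteEdges {e}).Reachable x y :=
    (deleteEdges_adj.2 ⟨hxy, by simpa using he'.symm⟩).reachable
  have hji : s(j, i) ≠ e := by rw [Sym2.eq_swap]; exact he.symm
  obtain ⟨-, h | ⟨hu, h⟩ | ⟨hw, h⟩⟩ := mergeInto_adj.1 huw
  · exact hedge h (by rintro rfl; simp at hmap)
  · obtain rfl : u = ⟨j, hij.ne'⟩ := Subtype.ext hu
    exact (hedge hij.symm hji.symm).trans (hedge h.symm (by rintro rfl; simp at hmap))
  · obtain rfl : w = ⟨j, hij.ne'⟩ := Subtype.ext hw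
    exact (hedge h (by rintro rfl; simp at hmap)).trans (hedge hij he)

theorem IsAcyclic.mergeInto (hG : G.IsAcyclic) (hij : G.Adj i j) :
    (G.mergeInto i j).IsAcyclic := by
  rw [isAcyclic_iff_forall_adj_isBridge]
  intro a b hab
  obtain ⟨x, y, hxy, rfl, rfl⟩ := exists_adj_of_mergeInto_adj hij.ne' hab
  rw [isBridge_iff]
  intro hre
  have he : s(x, y) ≠ s(i, j) := by
    intro h
    rcases Sym2.eq_iff.1 h with ⟨rfl, rfl⟩ | ⟨rfl, rfl⟩ <;>
      simp [mergeIntoMap_of_ne _ hij.ne'] at hab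
  have hlift : (G.deleteEdges {s(x, y)}).Reachable (mergeIntoMap hij.ne' x).1
      (mergeIntoMap hij.ne' y).1 := by
    refine hre.map_of_forall_adj Subtype.val fun u w huw => ?_
    rw [deleteEdges_adj] at huw
    exact reachable_deleteEdges_of_mergeInto_adj hij huw.1 he (by simpa [eq_comm] using huw.2)
  exact isBridge_iff.1 (isAcyclic_iff_forall_adj_isBridge.1 hG hxy)
    (((reachable_deleteEdges_mergeIntoMap hij he x).trans hlift).trans
      (reachable_deleteEdges_mergeIntoMap hij he y).symm)

theorem IsTree.mergeInto (hG : G.IsTree) (hij : G.Adj i j) : (G.mergeInto i j).IsTree :=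
  ⟨hG.1.mergeInto hij.ne', hG.2.mergeInto hij⟩

theorem _root_.RIP.mergeInto {V : Type*} {C : ι → Finset V} (hC : RIP G C) (hji : j ≠ i)
    (hsub : C i ⊆ C j) : RIP (G.mergeInto i j) (fun t => C t.1) := by
  intro v a b ha hb
  have hmem (x : {t | v ∈ C t}) : v ∈ C (mergeIntoMap hji x.1).1 := by
    obtain ⟨x, hx⟩ := x
    by_cases h : x = i
    · subst h
      simpa using hsub hx
    · simpa [mergeIntoMap_of_ne hji h] using hx
  let f (x : {t | v ∈ C t}) : {t : {t : ι // t ≠ i} | v ∈ C t.1} :=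
    ⟨mergeIntoMap hji x.1, hmem x⟩
  have hreach := (hC v a b ha hb).map_of_forall_adj f fun x y hxy => by
    rcases mergeIntoMap_eq_or_adj hji (induce_adj.1 hxy) with h | h
    · rw [show f x = f y from Subtype.ext h]
    · exact Adj.reachable (G := (G.mergeInto i j).induce _) h
  simpa [f] using hreach

end SimpleGraph

/-- removing a non-maximal clique and reconnecting its neighbors to a
containing clique preserves validity: if in a valid clique tree the clique `C i` is
contained in the adjacent clique `C j`, then deleting node `i` and connecting all other
neighbors of `i` directly to `j` yields a tree that still satisfies the running
intersection property (the sepsets among the remaining cliques, being intersections of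
the unchanged labels, are preserved). -/
theorem remove_nonmaximal_clique_preserves_validity
    {ι V : Type*} (G : SimpleGraph ι) (hT : G.IsTree)
    (C : ι → Finset V) (hRIP : RIP G C)
    (i j : ι) (hadj : G.Adj i j) (hsub : C i ⊆ C j) :
    (SimpleGraph.fromRel (fun a b : {t : ι // t ≠ i} =>
        G.Adj a.1 b.1 ∨ (a.1 = j ∧ G.Adj b.1 i) ∨ (b.1 = j ∧ G.Adj a.1 i))).IsTree ∧
    RIP (SimpleGraph.fromRel (fun a b : {t : ι // t ≠ i} =>
        G.Adj a.1 b.1 ∨ (a.1 = j ∧ G.Adj b.1 i) ∨ (b.1 = j ∧ G.Adj a.1 i)))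
      (fun t => C t.1) :=
  ⟨hT.mergeInto hadj, hRIP.mergeInto hadj.ne' hsub⟩
end
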